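/- Suppose the sequence (v^n)_{n≥0} solves the discrete wave scheme with zero source, i.e. r^n = 0 for all n ≥ 1. Then the discrete energy is exactly conserved: E^{n+1/2}(v) = E^{1/2}(v) for every n ≥ 1. -/

import Mathlib

open RealInnerProductSpace

/-- The discrete energy `E^{n+1/2}(v)` of the leapfrog scheme. -/
noncomputable def discE {H : Type*} [NormedAddCommGroup H] [InnerProductSpace ℝ H]
    (W : Submodule ℝ H) [W.HasOrthogonalProjection]
    (a : H →ₗ[ℝ] H →ₗ[ℝ] ℝ) (τ : ℝ) (v : ℕ → H) (n : ℕ) : ℝ :=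
  (1 / 2) * ‖(Submodule.orthogonalProjectionOnto W (τ⁻¹ • (v (n + 1) - v n)) : H)‖ ^ 2
    - (τ ^ 2 / 8) * a (τ⁻¹ • (v (n + 1) - v n)) (τ⁻¹ • (v (n + 1) - v n))
    + (1 / 2) * a ((2 : ℝ)⁻¹ • (v (n + 1) + v n)) ((2 : ℝ)⁻¹ • (v (n + 1) + v n))

/-! Testing the scheme at step `m + 1` with `w = v (m + 2) - v m` telescopes. Since
`v (m + 2) - 2 v (m + 1) + v m` and `v (m + 2) - v m` are the difference and the sum of two
consecutive increments, the `b`-part becomes the difference of `‖π (v (k + 1) - v k)‖² / τ²` at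
`k = m + 1` and `k = m`, and by symmetry the `a`-part becomes the difference of
`a (v (k + 1)) (v k)`. These are exactly the two terms of the energy once the `τ² / 8` correction
is absorbed, so the energy increment is half the source tested against `w`, which vanishes. -/

lemma real_inner_sub_add {F : Type*} [NormedAddCommGroup F] [InnerProductSpace ℝ F] (x y : F) :
    ⟪x - y, x + y⟫ = ‖x‖ ^ 2 - ‖y‖ ^ 2 := by
  rw [inner_sub_left, inner_add_right, inner_add_right, real_inner_self_eq_norm_sq,
    real_inner_self_eq_norm_sq, real_inner_comm]
  ring

section

variable {H : Type*} [NormedAddCommGroup H] [InnerProductSpace ℝ H]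
  {W : Submodule ℝ H} [W.HasOrthogonalProjection] {a : H →ₗ[ℝ] H →ₗ[ℝ] ℝ} {τ : ℝ}

local notation "π" x:max => (Submodule.orthogonalProjectionOnto W x : H)

lemma discE_eq_of_symm (hsymm : ∀ u w : H, a u w = a w u) (hτ : τ ≠ 0) (v : ℕ → H) (n : ℕ) :
    discE W a τ v n = ‖π (v (n + 1) - v n)‖ ^ 2 / (2 * τ ^ 2) + a (v (n + 1)) (v n) / 2 := by
  simp only [discE, map_smul, Submodule.coe_smul, norm_smul, map_add, map_sub,
    LinearMap.smul_apply, LinearMap.add_apply, LinearMap.sub_apply, smul_eq_mul, Real.norm_eq_abs,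
    mul_pow, sq_abs, hsymm (v n) (v (n + 1))]
  field_simp
  ring

lemma discE_succ_sub_discE (hsymm : ∀ u w : H, a u w = a w u) (hτ : τ ≠ 0) (v : ℕ → H) (m : ℕ) :
    discE W a τ v (m + 1) - discE W a τ v m =
      (⟪π ((τ ^ 2)⁻¹ • (v (m + 2) - 2 • v (m + 1) + v m)), π (v (m + 2) - v m)⟫
        + a (v (m + 1)) (v (m + 2) - v m)) / 2 := by
  have hb : ⟪π ((τ ^ 2)⁻¹ • (v (m + 2) - 2 • v (m + 1) + v m)), π (v (m + 2) - v m)⟫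
      = (‖π (v (m + 2) - v (m + 1))‖ ^ 2 - ‖π (v (m + 1) - v m)‖ ^ 2) / τ ^ 2 := by
    have hsecond : v (m + 2) - 2 • v (m + 1) + v m
        = (v (m + 2) - v (m + 1)) - (v (m + 1) - v m) := by
      rw [two_nsmul]; abel
    have hsum : v (m + 2) - v m = (v (m + 2) - v (m + 1)) + (v (m + 1) - v m) := by abel
    rw [hsecond, hsum, map_smul, map_sub, map_add, Submodule.coe_smul, Submodule.coe_sub,
      Submodule.coe_add, real_inner_smul_left, real_inner_sub_add, div_eq_inv_mul]
  have ha : a (v (m + 1)) (v (m + 2) - v m) = a (v (m + 2)) (v (m + 1)) - a (v (m + 1)) (v m) := by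
    rw [map_sub, hsymm (v (m + 1)) (v (m + 2))]
  rw [hb, ha, discE_eq_of_symm hsymm hτ, discE_eq_of_symm hsymm hτ]
  field_simp
  ring

lemma discE_succ_sub_discE_of_scheme (hsymm : ∀ u w : H, a u w = a w u) (hτ : τ ≠ 0)
    {V : Submodule ℝ H} {v r : ℕ → H} (hvV : ∀ n, v n ∈ V)
    (hscheme : ∀ n, 1 ≤ n → ∀ w ∈ V,
      ⟪π ((τ ^ 2)⁻¹ • (v (n + 1) - 2 • v n + v (n - 1))), π w⟫ + a (v n) w = ⟪r n, w⟫)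
    (m : ℕ) :
    discE W a τ v (m + 1) - discE W a τ v m = ⟪r (m + 1), v (m + 2) - v m⟫ / 2 := by
  rw [discE_succ_sub_discE hsymm hτ]
  exact congrArg (· / 2) (hscheme (m + 1) m.succ_pos _ (V.sub_mem (hvV _) (hvV _)))

end

theorem energy_conservation_general
    {H : Type*} [NormedAddCommGroup H] [InnerProductSpace ℝ H]
    (W V : Submodule ℝ H) [W.HasOrthogonalProjection]
    (a : H →ₗ[ℝ] H →ₗ[ℝ] ℝ) (hsymm : ∀ u w : H, a u w = a w u)
    (τ : ℝ) (hτ : 0 < τ)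
    (v r : ℕ → H) (hvV : ∀ n, v n ∈ V)
    (hr : ∀ n, 1 ≤ n → r n = 0)
    (hscheme : ∀ n, 1 ≤ n → ∀ w ∈ V,
      ⟪(Submodule.orthogonalProjectionOnto W ((τ ^ 2)⁻¹ • (v (n + 1) - 2 • v n + v (n - 1))) : H),
        (Submodule.orthogonalProjectionOnto W w : H)⟫ + a (v n) w = ⟪r n, w⟫)
    (n : ℕ) :
    discE W a τ v n = discE W a τ v 0 := by
  have hstep (m : ℕ) : discE W a τ v (m + 1) = discE W a τ v m := by
    rw [← sub_eq_zero, discE_succ_sub_discE_of_scheme hsymm hτ.ne' hvV hscheme,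
      hr (m + 1) m.succ_pos, inner_zero_left, zero_div]
  induction n with
  | zero => rfl
  | succ m ih => exact (hstep m).trans ih

/-- Exact discrete energy conservation for the scheme with zero source:
`E^{n+1/2}(v) = E^{1/2}(v)` for all `n ≥ 1`. -/
theorem energy_conservation
    {H : Type*} [NormedAddCommGroup H] [InnerProductSpace ℝ H]
    (W V : Submodule ℝ H) [W.HasOrthogonalProjection]
    (a : H →ₗ[ℝ] H →ₗ[ℝ] ℝ) (hsymm : ∀ u w : H, a u w = a w u)
    (τ : ℝ) (hτ : 0 < τ)
    (v r : ℕ → H) (hvV : ∀ n, v n ∈ V)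
    (hr : ∀ n, 1 ≤ n → r n = 0)
    (hscheme : ∀ n, 1 ≤ n → ∀ w ∈ V,
      ⟪(Submodule.orthogonalProjectionOnto W ((τ ^ 2)⁻¹ • (v (n + 1) - 2 • v n + v (n - 1))) : H),
        (Submodule.orthogonalProjectionOnto W w : H)⟫ + a (v n) w = ⟪r n, w⟫)
    (n : ℕ) (hn : 1 ≤ n) :
    discE W a τ v n = discE W a τ v 0 :=
  energy_conservation_general W V a hsymm τ hτ v r hvV hr hscheme n
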